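/- Extending the horizon backward with a zero initial state does not increase the minimal cost: for any disturbances w₀, …, w_T ∈ ℝⁿ, the minimum over u ∈ ℝ^{(T+1)m} of J_{T+1}(u, col(0, w₀, …, w_T)) is less than or equal to the minimum over u ∈ ℝ^{Tm} of J_T(u, col(w₀, w₁, …, w_T)), i.e., the minimal (T+1)-horizon cost starting at x₀ = 0 with disturbances (w₀, …, w_T) is at most the minimal T-horizon cost starting at x₀ = w₀ with disturbances (w₁, …, w_T). (Inequality (22) in the proof of Lemma 2.) -/

import Mathlib

open Matrix

noncomputable section

/-- Index type for stacked state / disturbance trajectories over horizon `T`: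
block index in `Fin (T+1)`, coordinate in `Fin n`. -/
abbrev SIdx (n T : ℕ) := Fin (T + 1) × Fin n

/-- Index type for stacked input trajectories over horizon `T`. -/
abbrev UIdx (m T : ℕ) := Fin T × Fin m

/-- The block-downshift operator `𝐙`. -/
def Zshift (n T : ℕ) : Matrix (SIdx n T) (SIdx n T) ℝ :=
  Matrix.of fun p q => if (p.1 : ℕ) = (q.1 : ℕ) + 1 ∧ p.2 = q.2 then (1 : ℝ) else 0

/-- `𝐀 = I_{T+1} ⊗ A`. -/
def bigA (n T : ℕ) (A : Matrix (Fin n) (Fin n) ℝ) : Matrix (SIdx n T) (SIdx n T) ℝ :=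
  Matrix.of fun p q => if p.1 = q.1 then A p.2 q.2 else 0

/-- `𝐁 = col(I_T ⊗ B, 0)`. -/
def bigB (n m T : ℕ) (B : Matrix (Fin n) (Fin m) ℝ) : Matrix (SIdx n T) (UIdx m T) ℝ :=
  Matrix.of fun p q => if (p.1 : ℕ) = (q.1 : ℕ) then B p.2 q.2 else 0

/-- `𝐐 = blkdiag(I_T ⊗ Q, 0)`. -/
def bigQ (n T : ℕ) (Q : Matrix (Fin n) (Fin n) ℝ) : Matrix (SIdx n T) (SIdx n T) ℝ :=
  Matrix.of fun p q => if p.1 = q.1 ∧ (p.1 : ℕ) < T then Q p.2 q.2 else 0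

/-- `𝐑 = I_T ⊗ R`. -/
def bigR (m T : ℕ) (R : Matrix (Fin m) (Fin m) ℝ) : Matrix (UIdx m T) (UIdx m T) ℝ :=
  Matrix.of fun p q => if p.1 = q.1 then R p.2 q.2 else 0

/-- `𝐅 = (I − 𝐙𝐀)⁻¹𝐙𝐁`. -/
def bigF (n m T : ℕ) (A : Matrix (Fin n) (Fin n) ℝ) (B : Matrix (Fin n) (Fin m) ℝ) :
    Matrix (SIdx n T) (UIdx m T) ℝ :=
  (1 - Zshift n T * bigA n T A)⁻¹ * (Zshift n T * bigB n m T B)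

/-- `𝐆 = (I − 𝐙𝐀)⁻¹`. -/
def bigG (n T : ℕ) (A : Matrix (Fin n) (Fin n) ℝ) : Matrix (SIdx n T) (SIdx n T) ℝ :=
  (1 - Zshift n T * bigA n T A)⁻¹

/-- The control cost `J_T(u, δ) = xᵀ𝐐x + uᵀ𝐑u` with `x = 𝐅u + 𝐆δ`. -/
def costJ (n m T : ℕ) (A : Matrix (Fin n) (Fin n) ℝ) (B : Matrix (Fin n) (Fin m) ℝ)
    (Q : Matrix (Fin n) (Fin n) ℝ) (R : Matrix (Fin m) (Fin m) ℝ)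
    (u : UIdx m T → ℝ) (δ : SIdx n T → ℝ) : ℝ :=
  let x := bigF n m T A B *ᵥ u + bigG n T A *ᵥ δ
  x ⬝ᵥ (bigQ n T Q *ᵥ x) + u ⬝ᵥ (bigR m T R *ᵥ u)

/-- `𝐏 = 𝐑 + 𝐅ᵀ𝐐𝐅`. -/
def bigP (n m T : ℕ) (A : Matrix (Fin n) (Fin n) ℝ) (B : Matrix (Fin n) (Fin m) ℝ)
    (Q : Matrix (Fin n) (Fin n) ℝ) (R : Matrix (Fin m) (Fin m) ℝ) :
    Matrix (UIdx m T) (UIdx m T) ℝ :=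
  bigR m T R + (bigF n m T A B)ᵀ * bigQ n T Q * bigF n m T A B

/-- The clairvoyant cost matrix `𝐂_T = 𝐆ᵀ𝐐(I + 𝐅𝐑⁻¹𝐅ᵀ𝐐)⁻¹𝐆`. -/
def Cmat (n m T : ℕ) (A : Matrix (Fin n) (Fin n) ℝ) (B : Matrix (Fin n) (Fin m) ℝ)
    (Q : Matrix (Fin n) (Fin n) ℝ) (R : Matrix (Fin m) (Fin m) ℝ) :
    Matrix (SIdx n T) (SIdx n T) ℝ :=
  (bigG n T A)ᵀ * bigQ n T Q *
    (1 + bigF n m T A B * (bigR m T R)⁻¹ * (bigF n m T A B)ᵀ * bigQ n T Q)⁻¹ * bigG n T A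

/-- Assemble `δ = col(x₀, w₀, …, w_{T−1})`. -/
def assemble (n T : ℕ) (x0 : Fin n → ℝ) (w : Fin T × Fin n → ℝ) : SIdx n T → ℝ :=
  fun p => if h : (p.1 : ℕ) = 0 then x0 p.2
    else w (⟨(p.1 : ℕ) - 1, by have := p.1.isLt; omega⟩, p.2)

/-! Every `T`-horizon input `u`, padded with a leading zero input, drives the `(T+1)`-horizon
system from `x₀ = 0` through the `T`-horizon trajectory of `u` delayed by one step (the state is
`0` until `w₀` enters). Both `𝐐` and `𝐑` weigh the delayed trajectory exactly as the original
one, so the padded input has the same cost, which bounds the `(T+1)`-horizon infimum.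

In matrix form: all block operators are Kronecker products `M ⊗ₖ N` of a `Fin`-indexed
0/1 matrix with `A`, `B`, `Q`, `R` or `1`, and the zero padding `𝐄 = S ⊗ₖ 1`, `S` the identity
shifted down by one row, intertwines the two horizons: `𝐙'𝐄 = 𝐄𝐙`, `𝐀'𝐄 = 𝐄𝐀`, `𝐁'𝐄 = 𝐄𝐁`,
`𝐄ᵀ𝐐'𝐄 = 𝐐` and `𝐄ᵀ𝐑'𝐄 = 𝐑`. Hence `𝐆'𝐄 = 𝐄𝐆` and `𝐅'𝐄 = 𝐄𝐅`, where `1 - 𝐙𝐀` is invertible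
because `𝐙𝐀` is strictly block lower triangular. -/

open scoped Kronecker

namespace Matrix

theorem pow_eq_zero_of_strictLowerTriangular {ι R : Type*} [Fintype ι] [DecidableEq ι]
    [Semiring R] {N : ℕ} (M : Matrix ι ι R) (b : ι → Fin N)
    (hM : ∀ i j, b i ≤ b j → M i j = 0) : M ^ N = 0 := by
  have key : ∀ k i j, (b i : ℕ) < b j + k → (M ^ k) i j = 0 := by
    intro k
    induction k with
    | zero =>
      intro i j hij
      exact one_apply_ne fun h => by subst h; omega
    | succ k ih =>
      intro i j hij
      rw [pow_succ', mul_apply]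
      refine Finset.sum_eq_zero fun l _ => ?_
      by_cases hil : b i ≤ b l
      · rw [hM i l hil, zero_mul]
      · rw [ih l j (by omega), mul_zero]
  ext i j
  exact key N i j (by omega)

theorem inv_mul_eq_mul_inv_of_mul_eq {ι κ R : Type*} [Fintype ι] [DecidableEq ι] [Fintype κ]
    [DecidableEq κ] [CommRing R] {P : Matrix ι ι R} {P' : Matrix κ κ R} {E : Matrix κ ι R}
    (hP : IsUnit P.det) (hP' : IsUnit P'.det) (h : P' * E = E * P) :
    P'⁻¹ * E = E * P⁻¹ :=
  calc P'⁻¹ * E = P'⁻¹ * (E * P) * P⁻¹ := by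
        rw [Matrix.mul_assoc, Matrix.mul_assoc, mul_nonsing_inv _ hP, Matrix.mul_one]
    _ = E * P⁻¹ := by rw [← h, ← Matrix.mul_assoc, nonsing_inv_mul _ hP', Matrix.one_mul]

theorem mulVec_dotProduct_mulVec_mulVec {ι κ R : Type*} [Fintype ι] [Fintype κ]
    [CommSemiring R] (E : Matrix κ ι R) (M : Matrix κ κ R) (x : ι → R) :
    (E *ᵥ x) ⬝ᵥ (M *ᵥ (E *ᵥ x)) = x ⬝ᵥ ((Eᵀ * M * E) *ᵥ x) := by
  rw [← mulVec_mulVec, ← mulVec_mulVec, dotProduct_mulVec x, vecMul_transpose]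

end Matrix

def downShift (k : ℕ) : Matrix (Fin k) (Fin k) ℝ :=
  of fun i j => if (i : ℕ) = j + 1 then 1 else 0

def truncEmb (k : ℕ) : Matrix (Fin (k + 1)) (Fin k) ℝ :=
  of fun i j => if (i : ℕ) = j then 1 else 0

def prefixDiag (k : ℕ) : Matrix (Fin (k + 1)) (Fin (k + 1)) ℝ :=
  diagonal fun i => if (i : ℕ) < k then 1 else 0

def succEmb (k : ℕ) : Matrix (Fin (k + 1)) (Fin k) ℝ :=
  of fun i j => if i = j.succ then 1 else 0

def prependZero (k p : ℕ) : Matrix (Fin (k + 1) × Fin p) (Fin k × Fin p) ℝ :=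
  succEmb k ⊗ₖ 1

@[simp]
theorem mul_succEmb_apply {ι : Type*} {k : ℕ} (M : Matrix ι (Fin (k + 1)) ℝ) (i : ι)
    (j : Fin k) : (M * succEmb k) i j = M i j.succ := by
  simp [mul_apply, succEmb]

@[simp]
theorem succEmb_mul_apply_zero {ι : Type*} {k : ℕ} (M : Matrix (Fin k) ι ℝ) (j : ι) :
    (succEmb k * M) 0 j = 0 := by
  simp [mul_apply, succEmb, (Fin.succ_ne_zero _).symm]

@[simp]
theorem succEmb_mul_apply_succ {ι : Type*} {k : ℕ} (M : Matrix (Fin k) ι ℝ) (i : Fin k)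
    (j : ι) : (succEmb k * M) i.succ j = M i j := by
  simp [mul_apply, succEmb]

@[simp]
theorem succEmb_transpose_mul_apply {ι : Type*} {k : ℕ} (M : Matrix (Fin (k + 1)) ι ℝ)
    (i : Fin k) (j : ι) : ((succEmb k)ᵀ * M) i j = M i.succ j := by
  simp [mul_apply, succEmb]

theorem downShift_mul_succEmb (k : ℕ) :
    downShift (k + 1 + 1) * succEmb (k + 1) = succEmb (k + 1) * downShift (k + 1) := by
  ext i j
  cases i using Fin.cases <;> simp [downShift]

theorem truncEmb_mul_succEmb (k : ℕ) :
    truncEmb (k + 1) * succEmb k = succEmb (k + 1) * truncEmb k := by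
  ext i j
  cases i using Fin.cases <;> simp [truncEmb]

theorem succEmb_transpose_mul_prefixDiag_mul (k : ℕ) :
    (succEmb (k + 1))ᵀ * prefixDiag (k + 1) * succEmb (k + 1) = prefixDiag k := by
  ext i j
  rw [mul_succEmb_apply, succEmb_transpose_mul_apply]
  simp [prefixDiag, diagonal_apply]

theorem succEmb_transpose_mul_self (k : ℕ) : (succEmb k)ᵀ * succEmb k = 1 := by
  ext i j
  rw [mul_succEmb_apply]
  simp [succEmb, one_apply, eq_comm]

theorem prependZero_mulVec_zero {k p : ℕ} (v : Fin k × Fin p → ℝ) (a : Fin p) :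
    (prependZero k p *ᵥ v) (0, a) = 0 := by
  simp [mulVec, dotProduct, prependZero, succEmb, (Fin.succ_ne_zero _).symm]

theorem prependZero_mulVec_succ {k p : ℕ} (v : Fin k × Fin p → ℝ) (i : Fin k) (a : Fin p) :
    (prependZero k p *ᵥ v) (i.succ, a) = v (i, a) := by
  simp [mulVec, dotProduct, prependZero, succEmb, Fintype.sum_prod_type, one_apply]

section Kronecker

variable {n m : ℕ} (T : ℕ)

theorem Zshift_eq_kronecker : Zshift n T = downShift (T + 1) ⊗ₖ 1 := by
  ext ⟨i, a⟩ ⟨j, b⟩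
  simp only [Zshift, downShift, of_apply, kronecker_apply, one_apply]
  split_ifs <;> simp_all

theorem bigA_eq_kronecker (A : Matrix (Fin n) (Fin n) ℝ) : bigA n T A = 1 ⊗ₖ A := by
  ext ⟨i, a⟩ ⟨j, b⟩
  simp [bigA, one_apply]

theorem bigB_eq_kronecker (B : Matrix (Fin n) (Fin m) ℝ) : bigB n m T B = truncEmb T ⊗ₖ B := by
  ext ⟨i, a⟩ ⟨j, b⟩
  simp [bigB, truncEmb]

theorem bigQ_eq_kronecker (Q : Matrix (Fin n) (Fin n) ℝ) : bigQ n T Q = prefixDiag T ⊗ₖ Q := by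
  ext ⟨i, a⟩ ⟨j, b⟩
  simp [bigQ, prefixDiag, diagonal_apply, ite_and]

theorem bigR_eq_kronecker (R : Matrix (Fin m) (Fin m) ℝ) : bigR m T R = 1 ⊗ₖ R := by
  ext ⟨i, a⟩ ⟨j, b⟩
  simp [bigR, one_apply]

theorem Zshift_mul_prependZero :
    Zshift n (T + 1) * prependZero (T + 1) n = prependZero (T + 1) n * Zshift n T := by
  simp only [Zshift_eq_kronecker, prependZero, ← mul_kronecker_mul, downShift_mul_succEmb]

theorem bigA_mul_prependZero (A : Matrix (Fin n) (Fin n) ℝ) :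
    bigA n (T + 1) A * prependZero (T + 1) n = prependZero (T + 1) n * bigA n T A := by
  simp only [bigA_eq_kronecker, prependZero, ← mul_kronecker_mul, Matrix.one_mul, Matrix.mul_one]

theorem bigB_mul_prependZero (B : Matrix (Fin n) (Fin m) ℝ) :
    bigB n m (T + 1) B * prependZero T m = prependZero (T + 1) n * bigB n m T B := by
  simp only [bigB_eq_kronecker, prependZero, ← mul_kronecker_mul, truncEmb_mul_succEmb,
    Matrix.one_mul, Matrix.mul_one]

theorem prependZero_transpose_mul_bigQ_mul (Q : Matrix (Fin n) (Fin n) ℝ) :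
    (prependZero (T + 1) n)ᵀ * bigQ n (T + 1) Q * prependZero (T + 1) n = bigQ n T Q := by
  simp only [bigQ_eq_kronecker, prependZero, ← kroneckerMap_transpose, transpose_one,
    ← mul_kronecker_mul, succEmb_transpose_mul_prefixDiag_mul, Matrix.one_mul, Matrix.mul_one]

theorem prependZero_transpose_mul_bigR_mul (R : Matrix (Fin m) (Fin m) ℝ) :
    (prependZero T m)ᵀ * bigR m (T + 1) R * prependZero T m = bigR m T R := by
  simp only [bigR_eq_kronecker, prependZero, ← kroneckerMap_transpose, transpose_one,
    ← mul_kronecker_mul, Matrix.mul_one, succEmb_transpose_mul_self, Matrix.one_mul]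

theorem isUnit_det_one_sub_Zshift_mul_bigA (A : Matrix (Fin n) (Fin n) ℝ) :
    IsUnit (1 - Zshift n T * bigA n T A).det := by
  rw [← isUnit_iff_isUnit_det]
  refine IsNilpotent.isUnit_one_sub ⟨T + 1, pow_eq_zero_of_strictLowerTriangular _ Prod.fst ?_⟩
  rintro ⟨i, a⟩ ⟨j, b⟩ hij
  have hij' : (i : ℕ) ≤ j := hij
  simp only [Zshift_eq_kronecker, bigA_eq_kronecker, ← mul_kronecker_mul, Matrix.mul_one,
    Matrix.one_mul, kronecker_apply, downShift, of_apply]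
  rw [if_neg (by omega), zero_mul]

theorem bigG_mul_prependZero (A : Matrix (Fin n) (Fin n) ℝ) :
    bigG n (T + 1) A * prependZero (T + 1) n = prependZero (T + 1) n * bigG n T A := by
  refine inv_mul_eq_mul_inv_of_mul_eq (isUnit_det_one_sub_Zshift_mul_bigA T A)
    (isUnit_det_one_sub_Zshift_mul_bigA (T + 1) A) ?_
  rw [Matrix.sub_mul, Matrix.mul_sub, Matrix.one_mul, Matrix.mul_one, Matrix.mul_assoc,
    bigA_mul_prependZero, ← Matrix.mul_assoc, Zshift_mul_prependZero, Matrix.mul_assoc]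

theorem bigF_mul_prependZero (A : Matrix (Fin n) (Fin n) ℝ) (B : Matrix (Fin n) (Fin m) ℝ) :
    bigF n m (T + 1) A B * prependZero T m = prependZero (T + 1) n * bigF n m T A B := by
  calc bigF n m (T + 1) A B * prependZero T m
      = bigG n (T + 1) A * (Zshift n (T + 1) * (bigB n m (T + 1) B * prependZero T m)) := by
        simp only [bigF, bigG, Matrix.mul_assoc]
    _ = bigG n (T + 1) A * (Zshift n (T + 1) * prependZero (T + 1) n) * bigB n m T B := by
        rw [bigB_mul_prependZero, Matrix.mul_assoc, Matrix.mul_assoc]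
    _ = bigG n (T + 1) A * prependZero (T + 1) n * (Zshift n T * bigB n m T B) := by
        rw [Zshift_mul_prependZero, Matrix.mul_assoc, Matrix.mul_assoc, Matrix.mul_assoc]
    _ = prependZero (T + 1) n * bigF n m T A B := by
        rw [bigG_mul_prependZero, Matrix.mul_assoc, bigF, bigG]

end Kronecker

variable {n m : ℕ}

theorem costJ_prependZero (T : ℕ) (A : Matrix (Fin n) (Fin n) ℝ)
    (B : Matrix (Fin n) (Fin m) ℝ) (Q : Matrix (Fin n) (Fin n) ℝ)
    (R : Matrix (Fin m) (Fin m) ℝ) (u : UIdx m T → ℝ) (δ : SIdx n T → ℝ) :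
    costJ n m (T + 1) A B Q R (prependZero T m *ᵥ u) (prependZero (T + 1) n *ᵥ δ) =
      costJ n m T A B Q R u δ := by
  have hx : bigF n m (T + 1) A B *ᵥ (prependZero T m *ᵥ u) +
      bigG n (T + 1) A *ᵥ (prependZero (T + 1) n *ᵥ δ) =
      prependZero (T + 1) n *ᵥ (bigF n m T A B *ᵥ u + bigG n T A *ᵥ δ) := by
    simp only [mulVec_mulVec, bigF_mul_prependZero, bigG_mul_prependZero, mulVec_add]
  simp only [costJ, hx, mulVec_dotProduct_mulVec_mulVec, prependZero_transpose_mul_bigQ_mul,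
    prependZero_transpose_mul_bigR_mul]

theorem costJ_nonneg (T : ℕ) (A : Matrix (Fin n) (Fin n) ℝ) (B : Matrix (Fin n) (Fin m) ℝ)
    {Q : Matrix (Fin n) (Fin n) ℝ} {R : Matrix (Fin m) (Fin m) ℝ} (hQ : Q.PosSemidef)
    (hR : R.PosSemidef) (u : UIdx m T → ℝ) (δ : SIdx n T → ℝ) :
    0 ≤ costJ n m T A B Q R u δ := by
  have hQ' : (bigQ n T Q).PosSemidef := by
    rw [bigQ_eq_kronecker]
    exact (PosSemidef.diagonal fun i => by positivity).kronecker hQ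
  have hR' : (bigR m T R).PosSemidef := by
    rw [bigR_eq_kronecker]
    exact PosSemidef.one.kronecker hR
  unfold costJ
  exact add_nonneg (by simpa only [star_trivial] using hQ'.dotProduct_mulVec_nonneg _)
    (by simpa only [star_trivial] using hR'.dotProduct_mulVec_nonneg u)

theorem assemble_zero_eq_prependZero_mulVec (T : ℕ) (w : Fin (T + 1) × Fin n → ℝ) :
    assemble n (T + 1) 0 w =
      prependZero (T + 1) n *ᵥ
        assemble n T (fun a => w (0, a)) (fun q => w (q.1.succ, q.2)) := by
  ext ⟨i, a⟩
  cases i using Fin.cases with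
  | zero => simp [assemble, prependZero_mulVec_zero]
  | succ i =>
    rw [prependZero_mulVec_succ]
    cases i using Fin.cases <;> rfl

theorem stmt10_general (n m T : ℕ)
    (A : Matrix (Fin n) (Fin n) ℝ) (B : Matrix (Fin n) (Fin m) ℝ)
    (Q : Matrix (Fin n) (Fin n) ℝ) (R : Matrix (Fin m) (Fin m) ℝ)
    (hQ : Q.PosSemidef) (hR : R.PosDef)
    (w : Fin (T + 1) × Fin n → ℝ) :
    (⨅ u : UIdx m (T + 1) → ℝ,
        costJ n m (T + 1) A B Q R u (assemble n (T + 1) 0 w)) ≤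
      ⨅ u : UIdx m T → ℝ,
        costJ n m T A B Q R u
          (assemble n T (fun p => w (0, p)) (fun q => w (q.1.succ, q.2))) := by
  have hbdd : BddBelow (Set.range fun u : UIdx m (T + 1) → ℝ =>
      costJ n m (T + 1) A B Q R u (assemble n (T + 1) 0 w)) :=
    ⟨0, by rintro _ ⟨u, rfl⟩; exact costJ_nonneg _ A B hQ hR.posSemidef u _⟩
  refine le_ciInf fun u => ?_
  calc _ ≤ costJ n m (T + 1) A B Q R (prependZero T m *ᵥ u) (assemble n (T + 1) 0 w) :=
        ciInf_le hbdd _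
    _ = _ := by rw [assemble_zero_eq_prependZero_mulVec, costJ_prependZero]

/-- Inequality (22) in the proof of Lemma 2: extending the horizon backward with a zero
initial state does not increase the minimal cost. -/
theorem stmt10 (n m T : ℕ) (hn : 0 < n) (hm : 0 < m) (hT : 1 ≤ T)
    (A : Matrix (Fin n) (Fin n) ℝ) (B : Matrix (Fin n) (Fin m) ℝ)
    (Q : Matrix (Fin n) (Fin n) ℝ) (R : Matrix (Fin m) (Fin m) ℝ)
    (hQ : Q.PosSemidef) (hR : R.PosDef)
    (w : Fin (T + 1) × Fin n → ℝ) :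
    (⨅ u : UIdx m (T + 1) → ℝ,
        costJ n m (T + 1) A B Q R u (assemble n (T + 1) 0 w)) ≤
      ⨅ u : UIdx m T → ℝ,
        costJ n m T A B Q R u
          (assemble n T (fun p => w (0, p)) (fun q => w (q.1.succ, q.2))) :=
  stmt10_general n m T A B Q R hQ hR w
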